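/- Let S and A be finite nonempty sets and λ > 0. Let Pen, Pen* : S × A → ℝ and Sc, Sc* : S → ℝ with Pen*(s,a) ≥ 0 for all (s,a) and Sc*(s) > 0 for all s. Set B := max_{s,a} (Sc*(s) + Pen*(s,a)) and C := min_s Sc*(s). If 0 < ε_R < C, |Pen(s,a) − Pen*(s,a)| < ε_R for all (s,a), and |Sc(s) − Sc*(s)| < ε_R for all s, then Sc(s) > 0 for all s and λ · max_{s,a} |Pen(s,a)/Sc(s) − Pen*(s,a)/Sc*(s)| ≤ (λ B / C) · ε_R / (C − ε_R). -/
import Mathlib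


/-- If `Pen` is `εR`-close to the nonnegative `Pen*` and `Sc` is `εR`-close
to the positive `Sc*`, with `0 < εR < C := min_s Sc*(s)` and
`B := max_{s,a} (Sc*(s) + Pen*(s,a))`, then `Sc` is positive and the scaled penalties
satisfy `λ · max_{s,a} |Pen/Sc − Pen*/Sc*| ≤ (λB/C) · εR/(C − εR)`. -/
theorem aup_scaled_penalty_bound
    {S A : Type*} [Fintype S] [Fintype A] [Nonempty S] [Nonempty A]
    (lam : ℝ) (hlam : 0 < lam)
    (Pen PenStar : S → A → ℝ) (Sc ScStar : S → ℝ)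
    (hPenStar : ∀ s a, 0 ≤ PenStar s a) (hScStar : ∀ s, 0 < ScStar s)
    (B C εR : ℝ)
    (hB : B = Finset.univ.sup' Finset.univ_nonempty
      fun q : S × A => ScStar q.1 + PenStar q.1 q.2)
    (hC : C = Finset.univ.inf' Finset.univ_nonempty fun s : S => ScStar s)
    (hεR0 : 0 < εR) (hεRC : εR < C)
    (hPenClose : ∀ s a, |Pen s a - PenStar s a| < εR)
    (hScClose : ∀ s, |Sc s - ScStar s| < εR) :
    (∀ s, 0 < Sc s) ∧
    lam * (Finset.univ.sup' Finset.univ_nonempty fun q : S × A =>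
        |Pen q.1 q.2 / Sc q.1 - PenStar q.1 q.2 / ScStar q.1|)
      ≤ lam * B / C * εR / (C - εR) := by
  have hCle : ∀ s : S, C ≤ ScStar s := by
    intro s; rw [hC]
    exact Finset.inf'_le _ (Finset.mem_univ s)
  have hC0 : 0 < C := hεR0.trans hεRC
  have hBge : ∀ q : S × A, ScStar q.1 + PenStar q.1 q.2 ≤ B := by
    intro q; rw [hB]
    exact Finset.le_sup' (fun q : S × A => ScStar q.1 + PenStar q.1 q.2) (Finset.mem_univ q)
  have hSc : ∀ s, 0 < Sc s := by
    intro s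
    have h1 := abs_lt.mp (hScClose s)
    have := hCle s
    linarith [h1.1]
  refine ⟨hSc, ?_⟩
  have key : ∀ q : S × A,
      |Pen q.1 q.2 / Sc q.1 - PenStar q.1 q.2 / ScStar q.1|
        ≤ εR * B / ((C - εR) * C) := by
    intro ⟨s, a⟩
    have hScs := hSc s
    have hSSs := hScStar s
    have hnum : |Pen s a * ScStar s - PenStar s a * Sc s| ≤ εR * B := by
      have e1 : Pen s a * ScStar s - PenStar s a * Sc s
          = (Pen s a - PenStar s a) * ScStar s - PenStar s a * (Sc s - ScStar s) := by
        ring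
      have h2 : |(Pen s a - PenStar s a) * ScStar s| ≤ εR * ScStar s := by
        rw [abs_mul, abs_of_pos hSSs]
        exact mul_le_mul_of_nonneg_right (hPenClose s a).le hSSs.le
      have h3 : |PenStar s a * (Sc s - ScStar s)| ≤ PenStar s a * εR := by
        rw [abs_mul, abs_of_nonneg (hPenStar s a)]
        exact mul_le_mul_of_nonneg_left (hScClose s).le (hPenStar s a)
      calc |Pen s a * ScStar s - PenStar s a * Sc s|
          ≤ |(Pen s a - PenStar s a) * ScStar s| + |PenStar s a * (Sc s - ScStar s)| := by
            rw [e1]; exact abs_sub _ _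
        _ ≤ εR * ScStar s + PenStar s a * εR := add_le_add h2 h3
        _ = εR * (ScStar s + PenStar s a) := by ring
        _ ≤ εR * B := mul_le_mul_of_nonneg_left (hBge (s, a)) hεR0.le
    have hden : (C - εR) * C ≤ Sc s * ScStar s := by
      have h1 := abs_lt.mp (hScClose s)
      have hScge : C - εR ≤ Sc s := by linarith [hCle s, h1.1]
      exact mul_le_mul hScge (hCle s) hC0.le hScs.le
    have hdenpos : 0 < (C - εR) * C := mul_pos (by linarith) hC0
    have e2 : Pen s a / Sc s - PenStar s a / ScStar s
        = (Pen s a * ScStar s - PenStar s a * Sc s) / (Sc s * ScStar s) := by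
      field_simp
    rw [e2, abs_div, abs_of_pos (mul_pos hScs hSSs)]
    have hB0 : 0 < B := lt_of_lt_of_le (by have := hCle s; have := hPenStar s a; linarith) (hBge (s, a))
    exact div_le_div₀ (mul_nonneg hεR0.le hB0.le) hnum hdenpos hden
  have hsup : (Finset.univ.sup' Finset.univ_nonempty fun q : S × A =>
      |Pen q.1 q.2 / Sc q.1 - PenStar q.1 q.2 / ScStar q.1|)
      ≤ εR * B / ((C - εR) * C) :=
    Finset.sup'_le _ _ fun q _ => key q
  have hfin : lam * (εR * B / ((C - εR) * C)) = lam * B / C * εR / (C - εR) := by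
    field_simp
  calc lam * (Finset.univ.sup' Finset.univ_nonempty fun q : S × A =>
        |Pen q.1 q.2 / Sc q.1 - PenStar q.1 q.2 / ScStar q.1|)
      ≤ lam * (εR * B / ((C - εR) * C)) := by
        exact mul_le_mul_of_nonneg_left hsup hlam.le
    _ = lam * B / C * εR / (C - εR) := hfin
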